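/- Let N ∈ ℕ with N ≥ 4. The polynomials φ̃_0, φ̃_1, …, φ̃_{N−4}, where φ̃_k(x) = T_k(x) − (2(k+2)/(k+3)) T_{k+2}(x) + ((k+1)/(k+3)) T_{k+4}(x), form a basis of the real vector space { p ∈ ℝ[X] : deg p ≤ N, p(1) = p(−1) = 0 and p'(1) = p'(−1) = 0 }; in particular they are linearly independent and this space has dimension N − 3. -/

import Mathlib

open Real Polynomial

/-- The k-th Chebyshev polynomial of the first kind, as a real polynomial. -/
noncomputable def chebT (n : ℕ) : Polynomial ℝ := Polynomial.Chebyshev.T ℝ (n : ℤ)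

/-- Shen's biharmonic basis function
`φ̃_k = T_k − (2(k+2)/(k+3)) T_{k+2} + ((k+1)/(k+3)) T_{k+4}`. -/
noncomputable def shenB (k : ℕ) : Polynomial ℝ :=
  chebT k - Polynomial.C ((2 * ((k : ℝ) + 2)) / ((k : ℝ) + 3)) * chebT (k + 2)
    + Polynomial.C (((k : ℝ) + 1) / ((k : ℝ) + 3)) * chebT (k + 4)

/-- The space `{ p ∈ ℝ[X] : deg p ≤ N, p(±1) = 0, p'(±1) = 0 }` of polynomials
of degree at most `N` satisfying the clamped (biharmonic) boundary conditions. -/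
noncomputable def clampedSpace (N : ℕ) : Submodule ℝ (Polynomial ℝ) where
  carrier := {p | p.degree ≤ (N : ℕ) ∧ p.eval (1 : ℝ) = 0 ∧ p.eval (-1 : ℝ) = 0 ∧
    (Polynomial.derivative p).eval (1 : ℝ) = 0 ∧
    (Polynomial.derivative p).eval (-1 : ℝ) = 0}
  add_mem' := by
    rintro p q ⟨hp, hp1, hp2, hp3, hp4⟩ ⟨hq, hq1, hq2, hq3, hq4⟩
    exact ⟨le_trans (Polynomial.degree_add_le p q) (max_le hp hq),
      by simp [hp1, hq1], by simp [hp2, hq2], by simp [hp3, hq3], by simp [hp4, hq4]⟩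
  zero_mem' := ⟨by simp, by simp, by simp, by simp, by simp⟩
  smul_mem' := by
    rintro c p ⟨hp, hp1, hp2, hp3, hp4⟩
    exact ⟨le_trans (Polynomial.degree_smul_le c p) hp,
      by simp [hp1], by simp [hp2], by simp [hp3], by simp [hp4]⟩

/-! The boundary conditions at `±1` hold for `φ̃_k` because `T_n(±1) = (±1)ⁿ` and
`T_n'(±1) = (±1)ⁿ⁺¹ n²`, so they reduce to two identities in `k`. Since `φ̃_k` has degree
`k + 4`, the `N - 3` functions are linearly independent. Conversely, a polynomial satisfying
the clamped conditions has double roots at `±1`, hence is `(X² - 1)²` times a polynomial of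
degree `< N - 3`; so the clamped space has dimension at most `N - 3` and is spanned by them. -/

open Polynomial Polynomial.Chebyshev

lemma degree_chebT (n : ℕ) : (chebT n).degree = n := by
  simp [chebT]

lemma chebT_eval_one (n : ℕ) : (chebT n).eval 1 = 1 := by
  simp [chebT]

lemma chebT_eval_neg_one (n : ℕ) : (chebT n).eval (-1) = (-1) ^ n := by
  simp [chebT, Int.negOnePow_def]

lemma derivative_chebT_eval_one (n : ℕ) : (derivative (chebT n)).eval 1 = (n : ℝ) ^ 2 := by
  simp [chebT, derivative_T_eval_one]

lemma derivative_chebT_eval_neg_one (n : ℕ) :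
    (derivative (chebT n)).eval (-1) = (-1) ^ (n + 1) * (n : ℝ) ^ 2 := by
  rcases n with _ | m
  · simp [chebT]
  · simp [chebT, T_derivative_eq_U, Int.negOnePow_def, pow_succ]
    ring

lemma degree_shenB (k : ℕ) : (shenB k).degree = (k + 4 : ℕ) := by
  have hlead : (C (((k : ℝ) + 1) / ((k : ℝ) + 3)) * chebT (k + 4)).degree = (k + 4 : ℕ) := by
    rw [degree_C_mul (by positivity), degree_chebT]
  have hlow : (chebT k - C (2 * ((k : ℝ) + 2) / ((k : ℝ) + 3)) * chebT (k + 2)).degree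
      < (k + 4 : ℕ) := by
    refine (degree_sub_le _ _).trans_lt (max_lt ?_ ?_)
    · rw [degree_chebT]; exact_mod_cast (by omega : k < k + 4)
    · rw [degree_C_mul (by positivity), degree_chebT]; exact_mod_cast (by omega : k + 2 < k + 4)
  rw [shenB, degree_add_eq_right_of_degree_lt (hlead ▸ hlow), hlead]

lemma shenB_ne_zero (k : ℕ) : shenB k ≠ 0 :=
  degree_ne_bot.1 (by simp [degree_shenB])

lemma shenB_eval_one (k : ℕ) : (shenB k).eval 1 = 0 := by
  simp only [shenB, eval_add, eval_sub, eval_mul, eval_C, chebT_eval_one]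
  field_simp
  ring

lemma shenB_eval_neg_one (k : ℕ) : (shenB k).eval (-1) = (-1) ^ k * (shenB k).eval 1 := by
  simp only [shenB, eval_add, eval_sub, eval_mul, eval_C, chebT_eval_one, chebT_eval_neg_one]
  ring

lemma derivative_shenB_eval_one (k : ℕ) : (derivative (shenB k)).eval 1 = 0 := by
  simp only [shenB, derivative_add, derivative_sub, derivative_C_mul, eval_add, eval_sub,
    eval_mul, eval_C, derivative_chebT_eval_one]
  push_cast
  field_simp
  ring

lemma derivative_shenB_eval_neg_one (k : ℕ) :
    (derivative (shenB k)).eval (-1) = (-1) ^ (k + 1) * (derivative (shenB k)).eval 1 := by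
  simp only [shenB, derivative_add, derivative_sub, derivative_C_mul, eval_add, eval_sub,
    eval_mul, eval_C, derivative_chebT_eval_one, derivative_chebT_eval_neg_one]
  ring

lemma shenB_mem_clampedSpace {k N : ℕ} (hk : k + 4 ≤ N) : shenB k ∈ clampedSpace N := by
  refine ⟨?_, shenB_eval_one k, ?_, derivative_shenB_eval_one k, ?_⟩
  · rw [degree_shenB]; exact_mod_cast hk
  · rw [shenB_eval_neg_one, shenB_eval_one, mul_zero]
  · rw [derivative_shenB_eval_neg_one, derivative_shenB_eval_one, mul_zero]

lemma Polynomial.linearIndependent_of_degree_strictMono {K : Type*} [Field K] {n : ℕ}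
    (v : Fin n → K[X]) (hv : ∀ i, v i ≠ 0) (hmono : StrictMono fun i => (v i).degree) :
    LinearIndependent K v := by
  induction n with
  | zero => exact linearIndependent_empty_type
  | succ n ih =>
    rw [← Fin.snoc_init_self v, linearIndependent_finSnoc]
    refine ⟨ih _ (fun i => hv _) (hmono.comp Fin.strictMono_castSucc), fun hmem => ?_⟩
    have hspan : Submodule.span K (Set.range (Fin.init v)) ≤
        degreeLT K (v (Fin.last n)).natDegree := by
      rw [Submodule.span_le]
      rintro _ ⟨i, rfl⟩
      rw [SetLike.mem_coe, mem_degreeLT, ← degree_eq_natDegree (hv _)]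
      exact hmono (Fin.castSucc_lt_last i)
    have hlt := mem_degreeLT.1 (hspan hmem)
    rw [← degree_eq_natDegree (hv _)] at hlt
    exact lt_irrefl _ hlt

lemma Polynomial.sq_X_sub_C_dvd_of_isRoot_derivative {R : Type*} [CommRing R] {p : R[X]} {a : R}
    (hp : p.IsRoot a) (hp' : (derivative p).IsRoot a) : (X - C a) ^ 2 ∣ p := by
  rcases eq_or_ne p 0 with rfl | hp0
  · exact dvd_zero _
  · exact (le_rootMultiplicity_iff hp0).1 ((one_lt_rootMultiplicity_iff_isRoot hp0).2 ⟨hp, hp'⟩)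

lemma clampedSpace_le_map_degreeLT (N : ℕ) :
    clampedSpace N ≤ (degreeLT ℝ (N - 3)).map (LinearMap.mulLeft ℝ ((X ^ 2 - 1) ^ 2)) := by
  rintro p ⟨hdeg, h1, h2, h1', h2'⟩
  have hcop : IsCoprime ((X - C (1 : ℝ)) ^ 2) ((X - C (-1 : ℝ)) ^ 2) :=
    (isCoprime_X_sub_C_of_isUnit_sub (by norm_num)).pow
  obtain ⟨r, rfl⟩ : (X ^ 2 - 1) ^ 2 ∣ p := by
    convert hcop.mul_dvd (sq_X_sub_C_dvd_of_isRoot_derivative h1 h1')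
      (sq_X_sub_C_dvd_of_isRoot_derivative h2 h2') using 1
    simp only [map_neg, map_one]
    ring
  refine ⟨r, ?_, rfl⟩
  rcases eq_or_ne r 0 with rfl | hr
  · exact zero_mem _
  have hq : ((X ^ 2 - 1 : ℝ[X]) ^ 2).natDegree = 4 := by compute_degree!
  have hpN : ((X ^ 2 - 1) ^ 2 * r).natDegree ≤ N := natDegree_le_iff_degree_le.2 hdeg
  rw [natDegree_mul (by rintro h; simp [h] at hq) hr, hq] at hpN
  rw [SetLike.mem_coe, mem_degreeLT, degree_eq_natDegree hr]
  exact_mod_cast (by omega : r.natDegree < N - 3)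

lemma finrank_degreeLT (K : Type*) [Field K] (n : ℕ) : Module.finrank K (degreeLT K n) = n := by
  simp [(degreeLTEquiv K n).finrank_eq]

/-- For `N ≥ 4`, the polynomials `φ̃_0, …, φ̃_{N−4}` form a basis of the space of
polynomials of degree at most `N` satisfying `p(±1) = p'(±1) = 0`; in particular
they are linearly independent and the space has dimension `N − 3`. -/
theorem shenB_is_basis (N : ℕ) (hN : 4 ≤ N) :
    (∀ k : ℕ, k ≤ N - 4 → shenB k ∈ clampedSpace N) ∧
    LinearIndependent ℝ (fun k : Fin (N - 3) => shenB (k : ℕ)) ∧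
    Submodule.span ℝ (Set.range (fun k : Fin (N - 3) => shenB (k : ℕ))) = clampedSpace N ∧
    Module.finrank ℝ (clampedSpace N) = N - 3 := by
  set shen := fun k : Fin (N - 3) => shenB (k : ℕ)
  have hmem : ∀ k : ℕ, k ≤ N - 4 → shenB k ∈ clampedSpace N :=
    fun k hk => shenB_mem_clampedSpace (by omega)
  have hli : LinearIndependent ℝ shen :=
    linearIndependent_of_degree_strictMono shen (fun k => shenB_ne_zero k) fun i j hij => by
      simp only [shen, degree_shenB]
      exact_mod_cast (by omega : (i : ℕ) + 4 < j + 4)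
  set M := (degreeLT ℝ (N - 3)).map (LinearMap.mulLeft ℝ ((X ^ 2 - 1 : ℝ[X]) ^ 2))
  have hspan_le : Submodule.span ℝ (Set.range shen) ≤ clampedSpace N :=
    Submodule.span_le.2 (Set.range_subset_iff.2 fun k => hmem k (by omega))
  have hspan_eq : Submodule.span ℝ (Set.range shen) = M := by
    refine Submodule.eq_of_le_of_finrank_le (hspan_le.trans (clampedSpace_le_map_degreeLT N)) ?_
    rw [finrank_span_eq_card hli, Fintype.card_fin, ← finrank_degreeLT ℝ (N - 3)]
    exact Submodule.finrank_map_le _ _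
  have hclamped : Submodule.span ℝ (Set.range shen) = clampedSpace N :=
    le_antisymm hspan_le (hspan_eq ▸ clampedSpace_le_map_degreeLT N)
  refine ⟨hmem, hli, hclamped, ?_⟩
  rw [← hclamped, finrank_span_eq_card hli, Fintype.card_fin]
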